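/- If F ~ N(μ, s²) with s > 0 and f* is a real constant, then E[max(f* − F, 0)] = (f* − μ) Φ((f* − μ)/s) + s φ((f* − μ)/s), where φ and Φ are the standard normal pdf and cdf (the closed-form expression of the Expected Improvement acquisition function for a Gaussian posterior). -/

import Mathlib

open MeasureTheory ProbabilityTheory
open scoped NNReal ENNReal

/-- The standard normal probability density function `φ`. -/
noncomputable def stdNormalPdf (u : ℝ) : ℝ :=
  (Real.sqrt (2 * Real.pi))⁻¹ * Real.exp (-u ^ 2 / 2)

/-- The standard normal cumulative distribution function `Φ`. -/
noncomputable def stdNormalCdf (u : ℝ) : ℝ :=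
  ∫ s in Set.Iic u, stdNormalPdf s

/-!
Writing `F = μ + s Z` with `Z ~ N(0, 1)`, the improvement is `s · max (a - Z) 0` with
`a = (f* - μ) / s`. On `{Z ≤ a}` the integrand splits as `a φ(u) - u φ(u)`; the first part
integrates to `a Φ(a)`, and since `φ' = -u φ` the second integrates to `φ(a)`.
-/

open Filter Set Real

lemma stdNormalPdf_eq_gaussianPDFReal : stdNormalPdf = gaussianPDFReal 0 1 := by
  ext u
  simp [stdNormalPdf, gaussianPDFReal]

lemma integral_gaussianReal_zero_one {E : Type*} [NormedAddCommGroup E] [NormedSpace ℝ E]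
    (f : ℝ → E) : ∫ u, f u ∂gaussianReal 0 1 = ∫ u, stdNormalPdf u • f u := by
  rw [integral_gaussianReal_eq_integral_smul one_ne_zero, stdNormalPdf_eq_gaussianPDFReal]

lemma integrable_stdNormalPdf : Integrable stdNormalPdf :=
  stdNormalPdf_eq_gaussianPDFReal ▸ integrable_gaussianPDFReal 0 1

lemma integrable_id_mul_stdNormalPdf : Integrable fun u ↦ u * stdNormalPdf u := by
  refine ((integrable_mul_exp_neg_mul_sq (b := 1 / 2) (by norm_num)).const_mul
    (√(2 * π))⁻¹).congr (ae_of_all _ fun u ↦ ?_)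
  simp only [stdNormalPdf]
  ring_nf

lemma hasDerivAt_stdNormalPdf (u : ℝ) : HasDerivAt stdNormalPdf (-u * stdNormalPdf u) u := by
  have h := (((hasDerivAt_pow 2 u).fun_neg.div_const 2).exp).const_mul (√(2 * π))⁻¹
  refine h.congr_deriv ?_
  simp only [stdNormalPdf]
  ring

lemma tendsto_stdNormalPdf_atBot : Tendsto stdNormalPdf atBot (nhds 0) := by
  have hsq : Tendsto (fun u : ℝ ↦ -u ^ 2 / 2) atBot atBot := by
    refine (tendsto_neg_atTop_atBot.comp ?_).atBot_div_const two_pos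
    have hneg : Tendsto (fun u : ℝ ↦ -u) atBot atTop := tendsto_neg_atBot_atTop
    simpa [sq] using hneg.atTop_mul_atTop₀ hneg
  exact mul_zero ((√(2 * π))⁻¹) ▸ (tendsto_exp_atBot.comp hsq).const_mul (√(2 * π))⁻¹

lemma integral_Iic_id_mul_stdNormalPdf (a : ℝ) :
    ∫ u in Iic a, u * stdNormalPdf u = -stdNormalPdf a := by
  have hFTC := integral_Iic_of_hasDerivAt_of_tendsto' (fun u _ ↦ hasDerivAt_stdNormalPdf u)
    (a := a) (by simpa using integrable_id_mul_stdNormalPdf.neg.integrableOn)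
    tendsto_stdNormalPdf_atBot
  simp only [neg_mul, integral_neg, sub_zero] at hFTC
  linarith

lemma integral_posPart_sub_mul_stdNormalPdf (a : ℝ) :
    ∫ u, max (a - u) 0 * stdNormalPdf u = a * stdNormalCdf a + stdNormalPdf a := by
  have hind : (fun u ↦ max (a - u) 0 * stdNormalPdf u)
      = (Iic a).indicator fun u ↦ a * stdNormalPdf u - u * stdNormalPdf u := by
    ext u
    by_cases hu : u ≤ a
    · simp [hu, sub_mul]
    · simp [hu, (sub_neg.2 (not_le.1 hu)).le]
  rw [hind, integral_indicator measurableSet_Iic,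
    integral_sub (integrable_stdNormalPdf.const_mul a).integrableOn
      integrable_id_mul_stdNormalPdf.integrableOn,
    integral_const_mul, integral_Iic_id_mul_stdNormalPdf, stdNormalCdf, sub_neg_eq_add]

lemma gaussianReal_eq_map_const_mul_add_gaussianReal_zero_one (μ : ℝ) (s : ℝ≥0) :
    gaussianReal μ (s ^ 2) = (gaussianReal 0 1).map fun u ↦ s * u + μ := by
  rw [show (fun u ↦ s * u + μ) = (· + μ) ∘ ((s : ℝ) * ·) from rfl,
    ← Measure.map_map (by fun_prop) (by fun_prop), gaussianReal_map_const_mul,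
    gaussianReal_map_add_const]
  congr 1
  · simp
  · ext; simp

lemma integral_posPart_sub_gaussianReal (μ : ℝ) {s : ℝ≥0} (hs : s ≠ 0) (fstar : ℝ) :
    ∫ x, max (fstar - x) 0 ∂gaussianReal μ (s ^ 2)
      = (fstar - μ) * stdNormalCdf ((fstar - μ) / s) + s * stdNormalPdf ((fstar - μ) / s) := by
  set a := (fstar - μ) / (s : ℝ)
  have hsa : (s : ℝ) * a = fstar - μ := mul_div_cancel₀ _ (NNReal.coe_ne_zero.2 hs)
  have hscale (u : ℝ) : max (fstar - (s * u + μ)) 0 = s * max (a - u) 0 := by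
    rw [mul_max_of_nonneg _ _ s.coe_nonneg, mul_zero, mul_sub, hsa]
    ring_nf
  rw [gaussianReal_eq_map_const_mul_add_gaussianReal_zero_one,
    integral_map (by fun_prop) (by fun_prop)]
  simp only [hscale, integral_const_mul, integral_gaussianReal_zero_one, smul_eq_mul,
    mul_comm (stdNormalPdf _), integral_posPart_sub_mul_stdNormalPdf, ← hsa]
  ring

theorem expected_improvement_closed_form_general
    {Ω : Type*} [MeasureSpace Ω]
    (F : Ω → ℝ) (μ : ℝ) (s : ℝ≥0) (hs : 0 < s) (fstar : ℝ)
    (hF : Measurable F)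
    (hlaw : Measure.map F ℙ = gaussianReal μ (s ^ 2)) :
    ∫ ω, max (fstar - F ω) 0 ∂ℙ
      = (fstar - μ) * stdNormalCdf ((fstar - μ) / (s : ℝ))
        + (s : ℝ) * stdNormalPdf ((fstar - μ) / (s : ℝ)) := by
  rw [← integral_posPart_sub_gaussianReal μ hs.ne', ← hlaw,
    integral_map hF.aemeasurable (by fun_prop)]

/-- Closed form of the Expected Improvement: if `F ~ N(μ, s²)` with `s > 0` and
`f* ∈ ℝ`, then `E[max(f* − F, 0)] = (f* − μ) Φ((f*−μ)/s) + s φ((f*−μ)/s)`. -/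
theorem expected_improvement_closed_form
    {Ω : Type*} [MeasureSpace Ω] [IsProbabilityMeasure (ℙ : Measure Ω)]
    (F : Ω → ℝ) (μ : ℝ) (s : ℝ≥0) (hs : 0 < s) (fstar : ℝ)
    (hF : Measurable F)
    (hlaw : Measure.map F ℙ = gaussianReal μ (s ^ 2)) :
    ∫ ω, max (fstar - F ω) 0 ∂ℙ
      = (fstar - μ) * stdNormalCdf ((fstar - μ) / (s : ℝ))
        + (s : ℝ) * stdNormalPdf ((fstar - μ) / (s : ℝ)) :=
  expected_improvement_closed_form_general F μ s hs fstar hF hlaw
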